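/- Let δ ∈ (0,1). The function f : [δ,1] × [0,1] → [0,∞) defined by f(q,s) := Σ_{k=0}^∞ (1−q²)·q^k·√s / √(1 − s·q^{2(k+1)}) for q ∈ [δ,1) and f(1,s) := 2·arcsin(√s) is continuous. -/

import Mathlib

/-- The function `ζ_{q,s}(x) := (1−q²)·q^x·√s / √(1 − s·q^{2(x+1)})`
(with `q ^ x` the real power). -/
noncomputable def zeta (q s x : ℝ) : ℝ :=
  (1 - q ^ 2) * q ^ x * Real.sqrt s / Real.sqrt (1 - s * q ^ (2 * (x + 1)))

/-- The function `f` defined by `f(q,s) := Σ_{k=0}^∞ ζ_{q,s}(k)` for `q ≠ 1` and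
`f(1,s) := 2·arcsin(√s)`. -/
noncomputable def fFun (q s : ℝ) : ℝ :=
  if q = 1 then 2 * Real.arcsin (Real.sqrt s) else ∑' k : ℕ, zeta q s k

/-!
Put `c = √s`. The `k`-th term of the series is `(1 + q)` times the slope `(b - a) / √(1 - a²)`
with `a = c q^(k+1)` and `b = c q^k`. Since `arcsin' = 1 / √(1 - x²)` is increasing on `[0, 1)`,
this slope lies between the increment `arcsin b - arcsin a` and the next increment along the
geometric sequence `c q^k`. Both increment series telescope, which gives
`(1 + q) arcsin (c q) ≤ f(q, s) ≤ (1 + q) arcsin c`, and this squeezes `f` to `2 arcsin c` as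
`q → 1`. For `q` bounded away from `1` the series is dominated by a geometric series, so it
converges uniformly.
-/

open Real Set Filter Topology

lemma Real.sub_div_sqrt_le_arcsin_sub {a b : ℝ} (ha : 0 ≤ a) (hab : a ≤ b) (hb : b ≤ 1) :
    (b - a) / √(1 - a ^ 2) ≤ arcsin b - arcsin a := by
  have hdiff : DifferentiableOn ℝ arcsin (interior (Icc a b)) := by
    rw [interior_Icc]
    exact fun x hx => (differentiableAt_arcsin.2 ⟨by linarith [hx.1], by linarith [hx.2]⟩)
      |>.differentiableWithinAt
  have hderiv : ∀ x ∈ interior (Icc a b), 1 / √(1 - a ^ 2) ≤ deriv arcsin x := by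
    rw [interior_Icc]
    intro x ⟨hax, hxb⟩
    rw [deriv_arcsin]
    exact one_div_le_one_div_of_le (sqrt_pos.2 (by nlinarith)) (sqrt_le_sqrt (by nlinarith))
  have := (convex_Icc a b).mul_sub_le_image_sub_of_le_deriv continuous_arcsin.continuousOn
    hdiff hderiv a (left_mem_Icc.2 hab) b (right_mem_Icc.2 hab) hab
  rwa [one_div_mul_eq_div] at this

lemma Real.arcsin_sub_le_sub_div_sqrt {a b : ℝ} (ha : -b ≤ a) (hab : a ≤ b) (hb : b < 1) :
    arcsin b - arcsin a ≤ (b - a) / √(1 - b ^ 2) := by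
  have hdiff : DifferentiableOn ℝ arcsin (interior (Icc a b)) := by
    rw [interior_Icc]
    exact fun x hx => (differentiableAt_arcsin.2 ⟨by linarith [hx.1], by linarith [hx.2]⟩)
      |>.differentiableWithinAt
  have hderiv : ∀ x ∈ interior (Icc a b), deriv arcsin x ≤ 1 / √(1 - b ^ 2) := by
    rw [interior_Icc]
    intro x ⟨hax, hxb⟩
    rw [deriv_arcsin]
    exact one_div_le_one_div_of_le (sqrt_pos.2 (by nlinarith)) (sqrt_le_sqrt (by nlinarith))
  have := (convex_Icc a b).image_sub_le_mul_sub_of_deriv_le continuous_arcsin.continuousOn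
    hdiff hderiv a (left_mem_Icc.2 hab) b (right_mem_Icc.2 hab) hab
  rwa [one_div_mul_eq_div] at this

lemma hasSum_sub_succ_of_antitone {f : ℕ → ℝ} {l : ℝ} (hf : Antitone f)
    (hl : Tendsto f atTop (𝓝 l)) : HasSum (fun n => f n - f (n + 1)) (f 0 - l) := by
  rw [hasSum_iff_tendsto_nat_of_nonneg (fun n => sub_nonneg.2 (hf n.le_succ))]
  simp only [Finset.sum_range_sub']
  exact tendsto_const_nhds.sub hl

lemma hasSum_arcsin_mul_pow_sub {c q : ℝ} (hc : 0 ≤ c) (hq0 : 0 ≤ q) (hq1 : q < 1) :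
    HasSum (fun k : ℕ => arcsin (c * q ^ k) - arcsin (c * q ^ (k + 1))) (arcsin c) := by
  have hanti : Antitone fun k : ℕ => arcsin (c * q ^ k) :=
    monotone_arcsin.comp_antitone fun _ _ hkl =>
      mul_le_mul_of_nonneg_left (pow_le_pow_of_le_one hq0 hq1.le hkl) hc
  have hlim : Tendsto (fun k : ℕ => arcsin (c * q ^ k)) atTop (𝓝 0) := by
    have hpow := (tendsto_pow_atTop_nhds_zero_of_lt_one hq0 hq1).const_mul c
    rw [mul_zero] at hpow
    simpa [Function.comp_def] using (continuous_arcsin.tendsto 0).comp hpow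
  simpa using hasSum_sub_succ_of_antitone hanti hlim

lemma zeta_natCast (q s : ℝ) (k : ℕ) :
    zeta q s k = (1 - q ^ 2) * q ^ k * √s / √(1 - s * q ^ (2 * (k + 1))) := by
  rw [zeta, rpow_natCast, show 2 * ((k : ℝ) + 1) = ((2 * (k + 1) : ℕ) : ℝ) by push_cast; ring,
    rpow_natCast]

lemma one_sub_sq_le_one_sub_mul_pow {q s : ℝ} (hq0 : 0 ≤ q) (hq1 : q ≤ 1) (hs0 : 0 ≤ s)
    (hs1 : s ≤ 1) (k : ℕ) : 1 - q ^ 2 ≤ 1 - s * q ^ (2 * (k + 1)) := by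
  have : q ^ (2 * (k + 1)) ≤ q ^ 2 := pow_le_pow_of_le_one hq0 hq1 (by omega)
  nlinarith [pow_nonneg hq0 (2 * (k + 1))]

lemma zeta_nonneg {q s : ℝ} (hq0 : 0 ≤ q) (hq1 : q ≤ 1) (k : ℕ) : 0 ≤ zeta q s k := by
  rw [zeta_natCast]
  have : 0 ≤ 1 - q ^ 2 := by nlinarith
  positivity

lemma zeta_le_pow {q s : ℝ} (hq0 : 0 ≤ q) (hq1 : q < 1) (hs0 : 0 ≤ s) (hs1 : s ≤ 1) (k : ℕ) :
    zeta q s k ≤ q ^ k := by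
  have hq2 : 0 < 1 - q ^ 2 := by nlinarith
  have hden : √(1 - q ^ 2) ≤ √(1 - s * q ^ (2 * (k + 1))) :=
    sqrt_le_sqrt (one_sub_sq_le_one_sub_mul_pow hq0 hq1.le hs0 hs1 k)
  rw [zeta_natCast, div_le_iff₀ (lt_of_lt_of_le (sqrt_pos.2 hq2) hden)]
  have hnum : (1 - q ^ 2) * √s ≤ √(1 - q ^ 2) := by
    calc (1 - q ^ 2) * √s ≤ 1 - q ^ 2 := mul_le_of_le_one_right hq2.le (sqrt_le_one.2 hs1)
      _ ≤ √(1 - q ^ 2) := le_sqrt_of_sq_le (by nlinarith)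
  calc (1 - q ^ 2) * q ^ k * √s = q ^ k * ((1 - q ^ 2) * √s) := by ring
    _ ≤ q ^ k * √(1 - s * q ^ (2 * (k + 1))) :=
      mul_le_mul_of_nonneg_left (hnum.trans hden) (pow_nonneg hq0 k)

lemma zeta_eq_mul_slope {q s : ℝ} (hs : 0 ≤ s) (k : ℕ) :
    zeta q s k = (1 + q) *
      ((√s * q ^ k - √s * q ^ (k + 1)) / √(1 - (√s * q ^ (k + 1)) ^ 2)) := by
  rw [zeta_natCast, mul_pow, sq_sqrt hs, ← pow_mul, mul_comm (k + 1)]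
  ring

lemma tsum_zeta_mem_Icc {q s : ℝ} (hq0 : 0 ≤ q) (hq1 : q < 1) (hs0 : 0 ≤ s) (hs1 : s ≤ 1) :
    ∑' k : ℕ, zeta q s k ∈ Icc ((1 + q) * arcsin (√s * q)) ((1 + q) * arcsin √s) := by
  set c := √s
  have hc0 : 0 ≤ c := sqrt_nonneg s
  have hc1 : c ≤ 1 := sqrt_le_one.2 hs1
  set w : ℕ → ℝ := fun k => (c * q ^ k - c * q ^ (k + 1)) / √(1 - (c * q ^ (k + 1)) ^ 2)
  set Δ : ℕ → ℝ := fun k => arcsin (c * q ^ k) - arcsin (c * q ^ (k + 1))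
  have hstep : ∀ k : ℕ, c * q ^ (k + 1) ≤ c * q ^ k := fun k =>
    mul_le_mul_of_nonneg_left (pow_le_pow_of_le_one hq0 hq1.le k.le_succ) hc0
  have hlt : ∀ k : ℕ, c * q ^ (k + 1) < 1 := fun k =>
    mul_lt_one_of_nonneg_of_lt_one_right hc1 (pow_nonneg hq0 _)
      (pow_lt_one₀ hq0 hq1 k.succ_ne_zero)
  have hw_le : ∀ k, w k ≤ Δ k := fun k =>
    sub_div_sqrt_le_arcsin_sub (by positivity) (hstep k)
      (mul_le_one₀ hc1 (pow_nonneg hq0 k) (pow_le_one₀ hq0 hq1.le))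
  have hΔ_succ_le : ∀ k, Δ (k + 1) ≤ w k := by
    intro k
    have hdiff : c * q ^ (k + 1) - c * q ^ (k + 1 + 1) ≤ c * q ^ k - c * q ^ (k + 1) := by
      rw [show c * q ^ (k + 1) - c * q ^ (k + 1 + 1) = q * (c * q ^ k - c * q ^ (k + 1)) by ring]
      exact mul_le_of_le_one_left (sub_nonneg.2 (hstep k)) hq1.le
    have hneg : -(c * q ^ (k + 1)) ≤ c * q ^ (k + 1 + 1) :=
      (neg_nonpos.2 (by positivity)).trans (by positivity)
    exact (arcsin_sub_le_sub_div_sqrt hneg (hstep (k + 1)) (hlt k)).trans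
      (div_le_div_of_nonneg_right hdiff (sqrt_nonneg _))
  have hΔ : HasSum Δ (arcsin c) := hasSum_arcsin_mul_pow_sub hc0 hq0 hq1
  have hΔ_succ : HasSum (fun k => Δ (k + 1)) (arcsin (c * q)) := by
    convert hasSum_arcsin_mul_pow_sub (mul_nonneg hc0 hq0) hq0 hq1 using 2 with k
    simp only [Δ, pow_succ', mul_assoc]
  have hw : Summable w := Summable.of_nonneg_of_le
    (fun k => div_nonneg (sub_nonneg.2 (hstep k)) (sqrt_nonneg _)) hw_le hΔ.summable
  have hzeta : ∑' k : ℕ, zeta q s k = (1 + q) * ∑' k, w k := by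
    rw [← tsum_mul_left]
    exact tsum_congr (zeta_eq_mul_slope hs0)
  rw [hzeta]
  exact ⟨mul_le_mul_of_nonneg_left (hasSum_le hΔ_succ_le hΔ_succ hw.hasSum) (by linarith),
    mul_le_mul_of_nonneg_left (hasSum_le hw_le hw.hasSum hΔ) (by linarith)⟩

lemma fFun_mem_Icc {q s : ℝ} (hq0 : 0 ≤ q) (hq1 : q ≤ 1) (hs0 : 0 ≤ s) (hs1 : s ≤ 1) :
    fFun q s ∈ Icc ((1 + q) * arcsin (√s * q)) ((1 + q) * arcsin √s) := by
  rcases hq1.lt_or_eq with hq1 | rfl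
  · rw [fFun, if_neg hq1.ne]
    exact tsum_zeta_mem_Icc hq0 hq1 hs0 hs1
  · norm_num [fFun]

lemma continuousOn_tsum_zeta {q₁ : ℝ} (hq₁0 : 0 ≤ q₁) (hq₁1 : q₁ < 1) :
    ContinuousOn (fun p : ℝ × ℝ => ∑' k : ℕ, zeta p.1 p.2 k) (Icc 0 q₁ ×ˢ Icc 0 1) := by
  refine continuousOn_tsum (u := fun k => q₁ ^ k) (fun k => ?_)
    (summable_geometric_of_lt_one hq₁0 hq₁1) ?_
  · refine ContinuousOn.congr (f := fun p : ℝ × ℝ =>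
      (1 - p.1 ^ 2) * p.1 ^ k * √p.2 / √(1 - p.2 * p.1 ^ (2 * (k + 1)))) ?_
      (fun p _ => zeta_natCast p.1 p.2 k)
    refine ContinuousOn.div (by fun_prop) (by fun_prop) ?_
    rintro ⟨q, s⟩ ⟨⟨hq0, hq⟩, hs0, hs1⟩
    have hq2 : 0 < 1 - q ^ 2 := by nlinarith
    exact (sqrt_pos.2 (hq2.trans_le
      (one_sub_sq_le_one_sub_mul_pow hq0 (hq.trans hq₁1.le) hs0 hs1 k))).ne'
  · rintro k ⟨q, s⟩ ⟨⟨hq0, hq⟩, hs0, hs1⟩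
    rw [Real.norm_of_nonneg (zeta_nonneg hq0 (hq.trans hq₁1.le) k)]
    exact (zeta_le_pow hq0 (hq.trans_lt hq₁1) hs0 hs1 k).trans (pow_le_pow_left₀ hq0 hq k)

lemma continuousWithinAt_fFun_one (s : ℝ) :
    ContinuousWithinAt (fun p : ℝ × ℝ => fFun p.1 p.2) (Icc 0 1 ×ˢ Icc 0 1) (1, s) := by
  have hlower : Continuous fun p : ℝ × ℝ => (1 + p.1) * arcsin (√p.2 * p.1) := by fun_prop
  have hupper : Continuous fun p : ℝ × ℝ => (1 + p.1) * arcsin √p.2 := by fun_prop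
  have hf1 : fFun 1 s = 2 * arcsin √s := if_pos rfl
  show Tendsto _ _ (𝓝 (fFun 1 s))
  refine tendsto_of_tendsto_of_tendsto_of_le_of_le' ?_ ?_
    (eventually_nhdsWithin_of_forall fun p ⟨⟨hq0, hq1⟩, hs0, hs1⟩ =>
      (fFun_mem_Icc hq0 hq1 hs0 hs1).1)
    (eventually_nhdsWithin_of_forall fun p ⟨⟨hq0, hq1⟩, hs0, hs1⟩ =>
      (fFun_mem_Icc hq0 hq1 hs0 hs1).2)
  · convert (hlower.tendsto (1, s)).mono_left nhdsWithin_le_nhds using 2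
    norm_num [hf1]
  · convert (hupper.tendsto (1, s)).mono_left nhdsWithin_le_nhds using 2
    norm_num [hf1]

lemma continuousOn_fFun :
    ContinuousOn (fun p : ℝ × ℝ => fFun p.1 p.2) (Icc 0 1 ×ˢ Icc 0 1) := by
  rintro ⟨q, s⟩ ⟨⟨hq0, hq1⟩, hs⟩
  dsimp only at hq0 hq1 hs
  rcases hq1.lt_or_eq with hq1 | rfl
  · obtain ⟨q₁, hqq₁, hq₁1⟩ := exists_between hq1
    have hnear : {p : ℝ × ℝ | p.1 < q₁} ∈ 𝓝 (q, s) :=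
      (isOpen_lt continuous_fst continuous_const).mem_nhds hqq₁
    have hsub : Icc 0 1 ×ˢ Icc 0 1 ∩ {p : ℝ × ℝ | p.1 < q₁} ⊆ Icc 0 q₁ ×ˢ Icc 0 1 :=
      fun p ⟨⟨hp, hs⟩, hpq⟩ => ⟨⟨hp.1, hpq.le⟩, hs⟩
    have hseries : ContinuousOn (fun p : ℝ × ℝ => fFun p.1 p.2) (Icc 0 q₁ ×ˢ Icc 0 1) :=
      (continuousOn_tsum_zeta (hq0.trans hqq₁.le) hq₁1).congr fun p hp =>
        if_neg (hp.1.2.trans_lt hq₁1).ne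
    rw [← continuousWithinAt_inter hnear]
    exact (hseries (q, s) ⟨⟨hq0, hqq₁.le⟩, hs⟩).mono hsub
  · exact continuousWithinAt_fFun_one s

/-- For `δ ∈ (0,1)`, the function `f : [δ,1] × [0,1] → [0,∞)` given by
`f(q,s) = Σ_{k=0}^∞ (1−q²)·q^k·√s / √(1 − s·q^{2(k+1)})` for `q ∈ [δ,1)` and
`f(1,s) = 2·arcsin(√s)` is continuous. -/
theorem stmt11 (δ : ℝ) (hδ : δ ∈ Set.Ioo (0 : ℝ) 1) :
    ContinuousOn (fun p : ℝ × ℝ => fFun p.1 p.2)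
      (Set.Icc δ 1 ×ˢ Set.Icc (0 : ℝ) 1) :=
  continuousOn_fFun.mono (prod_mono (Icc_subset_Icc_left hδ.1.le) subset_rfl)
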